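/- For integers d₁, d₂ with 2 ≤ d₁ ≤ 5, d₂ ≥ 3 and d₁ ≤ d₂, the inequality C(d₁+4,4) + C(d₂+4,4) - C(d₂+4-d₁,4) - 26 - C(d₁+d₂-1,4) + C(d₁-1,4) + C(d₂-1,4) > 0 holds, where C(n,k) denotes the binomial coefficient (taken to be 0 when n < k). -/
import Mathlib

private lemma c2 (n : ℕ) : 2 * (n.choose 2 : ℤ) = n * (n - 1) := by
  induction n with
  | zero => simp
  | succ k ih =>
    rw [Nat.choose_succ_succ, Nat.choose_one_right]
    push_cast
    push_cast at ih
    ring_nf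
    ring_nf at ih
    linarith

private lemma c3 (n : ℕ) : 6 * (n.choose 3 : ℤ) = n * (n - 1) * (n - 2) := by
  induction n with
  | zero => simp
  | succ k ih =>
    rw [Nat.choose_succ_succ]
    have := c2 k
    push_cast
    push_cast at ih this
    nlinarith [this, ih]

private lemma c4 (n : ℕ) : 24 * (n.choose 4 : ℤ) = n * (n - 1) * (n - 2) * (n - 3) := by
  induction n with
  | zero => simp
  | succ k ih =>
    rw [Nat.choose_succ_succ]
    have := c3 k
    push_cast
    push_cast at ih this
    nlinarith [this, ih]

/-- The key numerical condition `dim Φ(U_{d₁,d₂}) - h^{2,0} > 0` for smooth complete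
intersection surfaces of bidegree `(d₁,d₂)` in `ℙ⁴` with `2 ≤ d₁ ≤ 5`, `d₂ ≥ 3`,
`d₁ ≤ d₂`. -/
theorem stmt_1 (d₁ d₂ : ℕ) (h₁ : 2 ≤ d₁) (h₂ : d₁ ≤ 5) (h₃ : 3 ≤ d₂) (h₄ : d₁ ≤ d₂) :
    ((d₁ + 4).choose 4 : ℤ) + ((d₂ + 4).choose 4 : ℤ) - ((d₂ + 4 - d₁).choose 4 : ℤ) - 26
      - ((d₁ + d₂ - 1).choose 4 : ℤ) + ((d₁ - 1).choose 4 : ℤ) + ((d₂ - 1).choose 4 : ℤ) > 0 := by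
  obtain ⟨m, rfl⟩ : ∃ m, d₂ = m + 3 := ⟨d₂ - 3, by omega⟩
  have hm : (0:ℤ) ≤ (m:ℤ) := Int.natCast_nonneg m
  have hm2 : (0:ℤ) ≤ (m:ℤ) * (m:ℤ) := mul_nonneg hm hm
  have e7 := c4 (m+7); have e6 := c4 (m+6); have e5 := c4 (m+5)
  have e4 := c4 (m+4); have e3 := c4 (m+3); have e2 := c4 (m+2)
  push_cast at e7 e6 e5 e4 e3 e2
  rw [show m + 3 + 4 = m + 7 from by omega, show m + 3 - 1 = m + 2 from by omega]
  interval_cases d₁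
  · rw [show m + 7 - 2 = m + 5 from by omega, show 2 + (m+3) - 1 = m + 4 from by omega]
    norm_num [Nat.choose]
    linarith
  · rw [show m + 7 - 3 = m + 4 from by omega, show 3 + (m+3) - 1 = m + 5 from by omega]
    norm_num [Nat.choose]
    linarith
  · rw [show m + 7 - 4 = m + 3 from by omega, show 4 + (m+3) - 1 = m + 6 from by omega]
    norm_num [Nat.choose]
    linarith
  · rw [show m + 7 - 5 = m + 2 from by omega, show 5 + (m+3) - 1 = m + 7 from by omega]
    norm_num [Nat.choose]
    linarith
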